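/- Let (ε_k)_{k∈ℕ} ⊂ (0,1) be a sequence with ε_k → 0 as k → ∞, and suppose there is a constant α > 0 such that ε_{k+1} ≥ ε_k − α·ε_k² for all k ∈ ℕ. Then there exist k₀ ∈ ℕ and β > 0 such that ε_k ≥ β/k for all k ≥ k₀. -/

import Mathlib

open Filter

/-- Lemma 4.10 of the paper. If `(ε_k) ⊂ (0,1)`, `ε_k → 0`, and
`ε_{k+1} ≥ ε_k - α ε_k²` for some `α > 0` and all `k`, then there are `k₀ ∈ ℕ` and `β > 0`
with `ε_k ≥ β / k` for all `k ≥ k₀`. -/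
theorem statement10 (ε : ℕ → ℝ) (hmem : ∀ k, ε k ∈ Set.Ioo (0:ℝ) 1)
    (hlim : Tendsto ε atTop (nhds 0))
    (α : ℝ) (hα : 0 < α)
    (hrec : ∀ k : ℕ, ε k - α * ε k ^ 2 ≤ ε (k + 1)) :
    ∃ k₀ : ℕ, ∃ β : ℝ, 0 < β ∧ ∀ k : ℕ, k₀ ≤ k → β / (k : ℝ) ≤ ε k := by
  -- choose k₀ with ε k ≤ 1/(2α) for k ≥ k₀
  have hsmall : ∀ᶠ k in atTop, ε k < 1 / (2 * α) := by
    have := hlim.eventually (eventually_lt_nhds (show (0:ℝ) < 1 / (2*α) by positivity))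
    simpa using this
  obtain ⟨k₀, hk₀⟩ := eventually_atTop.mp hsmall
  have hpos : ∀ k, 0 < ε k := fun k => (hmem k).1
  -- key step: 1/ε(k+1) ≤ 1/ε k + 2α for k ≥ k₀
  have key : ∀ k, k₀ ≤ k → 1 / ε (k + 1) ≤ 1 / ε k + 2 * α := by
    intro k hk
    have hεs : ε k < 1 / (2 * α) := hk₀ k hk
    have h1 : α * ε k < 1 / 2 := by
      rw [lt_div_iff₀ (by positivity)] at hεs
      nlinarith
    have hprod : ε k * (1 - α * ε k) ≤ ε (k + 1) := by
      have := hrec k; nlinarith [hpos k]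
    have hfac : (0:ℝ) < 1 - α * ε k := by linarith
    have hp : 0 < ε k * (1 - α * ε k) := mul_pos (hpos k) hfac
    have h2 : 1 / ε (k + 1) ≤ 1 / (ε k * (1 - α * ε k)) :=
      one_div_le_one_div_of_le hp hprod
    have h3 : 1 / (ε k * (1 - α * ε k)) ≤ 1 / ε k + 2 * α := by
      have hεp := hpos k
      rw [div_le_iff₀ hp]
      have : (1 / ε k + 2 * α) * (ε k * (1 - α * ε k)) = (1 + 2 * α * ε k) * (1 - α * ε k) := by
        field_simp
      rw [this]
      nlinarith [mul_nonneg (mul_pos hα hεp).le (by linarith : (0:ℝ) ≤ 1 - 2 * (α * ε k))]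
    linarith
  -- induction: 1/ε (k₀ + n) ≤ 1/ε k₀ + 2α n
  have ind : ∀ n : ℕ, 1 / ε (k₀ + n) ≤ 1 / ε k₀ + 2 * α * n := by
    intro n
    induction n with
    | zero => simp
    | succ n ih =>
        have := key (k₀ + n) (Nat.le_add_right _ _)
        have : 1 / ε (k₀ + n + 1) ≤ 1 / ε k₀ + 2 * α * n + 2 * α := by linarith
        have hc : k₀ + (n + 1) = (k₀ + n) + 1 := by ring
        rw [hc]
        push_cast
        linarith
  set A := 1 / ε k₀ with hA
  have hApos : 0 < A := one_div_pos.mpr (hpos k₀)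
  refine ⟨max k₀ 1, 1 / (A + 2 * α), div_pos one_pos (by linarith), ?_⟩
  intro k hk
  have hk1 : 1 ≤ k := le_trans (le_max_right _ _) hk
  have hkk₀ : k₀ ≤ k := le_trans (le_max_left _ _) hk
  obtain ⟨n, rfl⟩ := Nat.exists_eq_add_of_le hkk₀
  have h1 : 1 / ε (k₀ + n) ≤ A + 2 * α * ((k₀ + n : ℕ) : ℝ) := by
    have := ind n
    have hn : (n : ℝ) ≤ ((k₀ + n : ℕ) : ℝ) := by push_cast; linarith [Nat.cast_nonneg (α := ℝ) k₀]
    nlinarith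
  have hkR : (1:ℝ) ≤ ((k₀ + n : ℕ) : ℝ) := by exact_mod_cast hk1
  have h2 : A + 2 * α * ((k₀ + n : ℕ) : ℝ) ≤ (A + 2 * α) * ((k₀ + n : ℕ) : ℝ) := by nlinarith
  have hεp := hpos (k₀ + n)
  rw [div_le_iff₀ (by linarith : (0:ℝ) < ((k₀ + n : ℕ) : ℝ))]
  rw [div_le_iff₀ (by linarith : (0:ℝ) < A + 2 * α)]
  have h3 : 1 / ε (k₀ + n) ≤ (A + 2 * α) * ((k₀ + n : ℕ) : ℝ) := le_trans h1 h2
  rw [div_le_iff₀ hεp] at h3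
  nlinarith
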